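/- arXiv:1702.03096 — 5 statements merged into one kernel-verified Lean document; each statement's English description precedes it below -/
import Mathlib

section
/- Soundness of KE-tableau construction: if the initial set of formulae Φ is satisfiable, then any KE-tableau for Φ obtained by finitely many applications of the E-rule and the PB-rule is not closed. -/
universe u

/-- Quantifier-free level-0 atoms: x = y, x ∈ X¹, ⟨x,y⟩ ∈ X³. -/
inductive Atom (V A₁ A₃ : Type u) where
  | eq : V → V → Atom V A₁ A₃
  | mem1 : V → A₁ → Atom V A₁ A₃
  | mem3 : V → V → A₃ → Atom V A₁ A₃

/-- A literal is an atom with a polarity. -/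
structure KLit (V A₁ A₃ : Type u) where
  pos : Bool
  atom : Atom V A₁ A₃

def KLit.compl {V A₁ A₃ : Type u} (l : KLit V A₁ A₃) : KLit V A₁ A₃ :=
  ⟨!l.pos, l.atom⟩

/-- A clause is a disjunction of literals; a literal is identified with a
one-element clause. -/
abbrev Clause (V A₁ A₃ : Type u) := List (KLit V A₁ A₃)

def Atom.eval {V A₁ A₃ D : Type u} (val : V → D) (m1 : A₁ → Set D)
    (m3 : A₃ → Set (D × D)) : Atom V A₁ A₃ → Prop
  | .eq x y => val x = val y
  | .mem1 x X => val x ∈ m1 X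
  | .mem3 x y X => (val x, val y) ∈ m3 X

def KLit.eval {V A₁ A₃ D : Type u} (val : V → D) (m1 : A₁ → Set D)
    (m3 : A₃ → Set (D × D)) (l : KLit V A₁ A₃) : Prop :=
  if l.pos then l.atom.eval val m1 m3 else ¬ l.atom.eval val m1 m3

def Clause.eval {V A₁ A₃ D : Type u} (val : V → D) (m1 : A₁ → Set D)
    (m3 : A₃ → Set (D × D)) (c : Clause V A₁ A₃) : Prop :=
  ∃ l ∈ c, l.eval val m1 m3

/-- T' is obtained from T by one application of the E-rule or of the PB-rule. -/
def Step {V A₁ A₃ : Type u} (T T' : Set (Set (Clause V A₁ A₃))) : Prop :=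
  (∃ ϑ ∈ T, ∃ (c : Clause V A₁ A₃) (i : Fin c.length),
      c ∈ ϑ ∧ (∀ j : Fin c.length, j ≠ i → ([(c.get j).compl] : Clause V A₁ A₃) ∈ ϑ) ∧
      T' = (T \ {ϑ}) ∪ {insert ([c.get i] : Clause V A₁ A₃) ϑ}) ∨
  (∃ ϑ ∈ T, ∃ l : KLit V A₁ A₃,
      T' = (T \ {ϑ}) ∪ {insert ([l] : Clause V A₁ A₃) ϑ,
                        insert ([l.compl] : Clause V A₁ A₃) ϑ})

/-- A branch is closed if it contains a complementary pair of literals or a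
literal ¬(x = x). -/
def ClosedBranch {V A₁ A₃ : Type u} (ϑ : Set (Clause V A₁ A₃)) : Prop :=
  (∃ l : KLit V A₁ A₃, ([l] : Clause V A₁ A₃) ∈ ϑ ∧ ([l.compl] : Clause V A₁ A₃) ∈ ϑ) ∨
  (∃ x : V, ([⟨false, Atom.eq x x⟩] : Clause V A₁ A₃) ∈ ϑ)


section Aux
variable {V A₁ A₃ D : Type u} (val : V → D) (m1 : A₁ → Set D) (m3 : A₃ → Set (D × D))

def SatBranch (ϑ : Set (Clause V A₁ A₃)) : Prop :=
  ∀ c ∈ ϑ, Clause.eval val m1 m3 c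

lemma compl_eval (l : KLit V A₁ A₃) :
    KLit.eval val m1 m3 l.compl ↔ ¬ KLit.eval val m1 m3 l := by
  cases l with
  | mk p a =>
    cases p <;> simp [KLit.eval, KLit.compl]

lemma step_preserves {T T' : Set (Set (Clause V A₁ A₃))} (h : Step T T')
    (hs : ∃ ϑ ∈ T, SatBranch val m1 m3 ϑ) :
    ∃ ϑ ∈ T', SatBranch val m1 m3 ϑ := by
  obtain ⟨ϑ₀, hϑ₀, hsat⟩ := hs
  rcases h with ⟨ϑ, hϑT, c, i, hc, hcompl, rfl⟩ | ⟨ϑ, hϑT, l, rfl⟩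
  · by_cases hne : ϑ₀ = ϑ
    · subst hne
      refine ⟨insert [c.get i] ϑ₀, Or.inr rfl, ?_⟩
      intro d hd
      rcases hd with rfl | hd
      · obtain ⟨m, hm, hme⟩ := hsat c hc
        obtain ⟨j, rfl⟩ := List.mem_iff_get.mp hm
        by_cases hji : j = i
        · subst hji; exact ⟨c.get j, List.mem_singleton.mpr rfl, hme⟩
        · exfalso
          have h2 := hsat _ (hcompl j hji)
          obtain ⟨m', hm', hme'⟩ := h2
          rw [List.mem_singleton] at hm'
          subst hm'
          exact (compl_eval val m1 m3 _).mp hme' hme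
      · exact hsat d hd
    · exact ⟨ϑ₀, Or.inl ⟨hϑ₀, hne⟩, hsat⟩
  · by_cases hne : ϑ₀ = ϑ
    · subst hne
      by_cases hl : KLit.eval val m1 m3 l
      · refine ⟨insert [l] ϑ₀, Or.inr (Or.inl rfl), ?_⟩
        intro d hd
        rcases hd with rfl | hd
        · exact ⟨l, List.mem_singleton.mpr rfl, hl⟩
        · exact hsat d hd
      · refine ⟨insert [l.compl] ϑ₀, Or.inr (Or.inr rfl), ?_⟩
        intro d hd
        rcases hd with rfl | hd
        · exact ⟨l.compl, List.mem_singleton.mpr rfl, (compl_eval val m1 m3 l).mpr hl⟩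
        · exact hsat d hd
    · exact ⟨ϑ₀, Or.inl ⟨hϑ₀, hne⟩, hsat⟩

lemma sat_not_closed {ϑ : Set (Clause V A₁ A₃)} (hs : SatBranch val m1 m3 ϑ) :
    ¬ ClosedBranch ϑ := by
  rintro (⟨l, h1, h2⟩ | ⟨x, hx⟩)
  · obtain ⟨m, hm, hme⟩ := hs _ h1
    rw [List.mem_singleton] at hm; subst hm
    obtain ⟨m', hm', hme'⟩ := hs _ h2
    rw [List.mem_singleton] at hm'; subst hm'
    exact (compl_eval val m1 m3 _).mp hme' hme
  · obtain ⟨m, hm, hme⟩ := hs _ hx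
    rw [List.mem_singleton] at hm; subst hm
    exact hme rfl

end Aux

/-- Soundness of KE-tableau construction: if the initial set Φ of disjunctions of
literals is satisfiable, then any KE-tableau for Φ obtained by finitely many
applications of the E-rule and of the PB-rule is not closed. -/
theorem ke_tableau_sound {V A₁ A₃ : Type u} (Φ : Set (Clause V A₁ A₃))
    (hsat : ∃ (D : Type u) (val : V → D) (m1 : A₁ → Set D) (m3 : A₃ → Set (D × D)),
      ∀ c ∈ Φ, Clause.eval val m1 m3 c)
    (T : Set (Set (Clause V A₁ A₃)))
    (hT : Relation.ReflTransGen Step {Φ} T) :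
    ¬ (∀ ϑ ∈ T, ClosedBranch ϑ) := by
  obtain ⟨D, val, m1, m3, hΦ⟩ := hsat
  have key : ∃ ϑ ∈ T, SatBranch val m1 m3 ϑ := by
    induction hT with
    | refl => exact ⟨Φ, rfl, hΦ⟩
    | tail _ hstep ih => exact step_preserves val m1 m3 hstep ih
  obtain ⟨ϑ, hϑ, hs⟩ := key
  intro hclosed
  exact sat_not_closed val m1 m3 hs (hclosed ϑ hϑ)
end

section
/- Invariant of the equality-elimination loop: let ϑ be a branch satisfied by an interpretation M, and let σ be built iteratively by repeatedly choosing an unresolved equality x = y from Eq (initially the equalities on ϑ), composing σ with {x/z, y/z} where z = min(x,y) in a fixed total order, and applying σ to Eq. Then at every iteration, M x = M (x σ) holds for every variable x occurring on ϑ. -/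
/-- One iteration of the equality-elimination loop: pick an equality (x,y) with x ≠ y
from the current set, compose the current substitution with {x/z, y/z} where
z = min x y, and apply the update to the set of equalities. -/
def EqElimStep {V : Type*} [LinearOrder V]
    (s t : (V → V) × Set (V × V)) : Prop :=
  ∃ x y : V, (x, y) ∈ s.2 ∧ x ≠ y ∧
    t.1 = (fun w => if w = x ∨ w = y then min x y else w) ∘ s.1 ∧
    t.2 = (fun p : V × V =>
      ((fun w => if w = x ∨ w = y then min x y else w) p.1,
       (fun w => if w = x ∨ w = y then min x y else w) p.2)) '' s.2

/-- Invariant of the equality-elimination loop (Lemma 2): if M satisfies all the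
equalities occurring on the branch, then at every iteration of the loop,
M x = M (x σ) for every variable x. -/
theorem eq_elim_invariant {V D : Type*} [LinearOrder V]
    (M : V → D) (Eq₀ : Set (V × V))
    (hEq : ∀ p ∈ Eq₀, M p.1 = M p.2)
    (σ : V → V) (E : Set (V × V))
    (h : Relation.ReflTransGen EqElimStep (id, Eq₀) (σ, E)) :
    ∀ v : V, M v = M (σ v) := by
  suffices H : ∀ s : (V → V) × Set (V × V),
      Relation.ReflTransGen EqElimStep (id, Eq₀) s →
      (∀ v : V, M v = M (s.1 v)) ∧ (∀ p ∈ s.2, M p.1 = M p.2) by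
    exact (H (σ, E) h).1
  intro s hs
  induction hs with
  | refl => exact ⟨fun v => rfl, hEq⟩
  | tail _ step ih =>
    obtain ⟨x, y, hxy, _, h1, h2⟩ := step
    have hMxy : M x = M y := ih.2 _ hxy
    have hf : ∀ w, M ((fun w => if w = x ∨ w = y then min x y else w) w) = M w := by
      intro w
      by_cases hw : w = x ∨ w = y
      · simp only [hw, if_true]
        rcases min_choice x y with hm | hm <;> rw [hm] <;>
          rcases hw with h | h <;> subst h <;> simp [hMxy]
      · simp [hw]
    constructor
    · intro v
      rw [h1]
      simp only [Function.comp_apply]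
      rw [hf, ← ih.1 v]
    · intro p hp
      rw [h2] at hp
      obtain ⟨q, hq, rfl⟩ := hp
      simp only
      rw [hf, hf]
      exact ih.2 _ hq
end

section
/- Model existence from an open complete branch: if ϑ is an open, fulfilled, complete branch (every disjunction on ϑ has some disjunct on ϑ; ϑ contains no complementary pair and no literal ¬(x=x) and no equality x=y with distinct variables), then the canonical interpretation M_ϑ—whose domain is the set of variables on ϑ, assigning Mx = x, MX¹ = {x : the literal x ∈ X¹ occurs on ϑ}, MX³ = {(x,y) : the literal ⟨x,y⟩ ∈ X³ occurs on ϑ}—satisfies every formula occurring on ϑ. -/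
universe u

/-- Model existence from an open, fulfilled, complete branch: the canonical
interpretation M_ϑ — domain the variables of the branch, Mx = x,
MX¹ = {x : the literal x ∈ X¹ occurs on ϑ}, MX³ = {(x,y) : ⟨x,y⟩ ∈ X³ occurs on ϑ} —
satisfies every formula occurring on ϑ. -/
theorem canonical_model_satisfies_branch {V A₁ A₃ : Type u}
    (ϑ : Set (Clause V A₁ A₃))
    (hfulfilled : ∀ c ∈ ϑ, ∃ l ∈ c, ([l] : Clause V A₁ A₃) ∈ ϑ)
    (hopen : ¬ ((∃ l : KLit V A₁ A₃,
        ([l] : Clause V A₁ A₃) ∈ ϑ ∧ ([l.compl] : Clause V A₁ A₃) ∈ ϑ) ∨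
      (∃ x : V, ([⟨false, Atom.eq x x⟩] : Clause V A₁ A₃) ∈ ϑ)))
    (hnoeq : ∀ x y : V, ([⟨true, Atom.eq x y⟩] : Clause V A₁ A₃) ∈ ϑ → x = y) :
    ∀ c ∈ ϑ, Clause.eval (fun x : V => x)
      (fun X : A₁ => {x : V | ([⟨true, Atom.mem1 x X⟩] : Clause V A₁ A₃) ∈ ϑ})
      (fun X : A₃ => {p : V × V | ([⟨true, Atom.mem3 p.1 p.2 X⟩] : Clause V A₁ A₃) ∈ ϑ})
      c := by
  push_neg at hopen
  obtain ⟨h1, h2⟩ := hopen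
  intro c hc
  obtain ⟨l, hlc, hl⟩ := hfulfilled c hc
  refine ⟨l, hlc, ?_⟩
  obtain ⟨p, a⟩ := l
  cases p <;> simp [KLit.eval]
  · -- negative literal: show atom is false
    intro hev
    cases a with
    | eq x y =>
      simp [Atom.eval] at hev
      subst hev
      exact h2 x hl
    | mem1 x X =>
      simp [Atom.eval] at hev
      exact h1 ⟨false, Atom.mem1 x X⟩ hl hev
    | mem3 x y X =>
      simp [Atom.eval] at hev
      exact h1 ⟨false, Atom.mem3 x y X⟩ hl hev
  · cases a with
    | eq x y => simpa [Atom.eval] using hnoeq x y hl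
    | mem1 x X => simpa [Atom.eval] using hl
    | mem3 x y X => simpa [Atom.eval] using hl
end

section
/- Completeness of the KE-tableau: if the complete KE-tableau T for a finite set Φ of disjunctions of literals has at least one open branch, then Φ is satisfiable. -/
universe u

/-- Every disjunction on the branch has some disjunct occurring (as a literal) on it. -/
def Fulfilled {V A₁ A₃ : Type u} (ϑ : Set (Clause V A₁ A₃)) : Prop :=
  ∀ c ∈ ϑ, ∃ l ∈ c, ([l] : Clause V A₁ A₃) ∈ ϑ

/-- The branch contains no equality literal x = y between distinct variables. -/
def NoDistinctEq {V A₁ A₃ : Type u} (ϑ : Set (Clause V A₁ A₃)) : Prop :=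
  ∀ x y : V, ([⟨true, Atom.eq x y⟩] : Clause V A₁ A₃) ∈ ϑ → x = y

lemma ke_phi_subset {V A₁ A₃ : Type u} {Φ : Set (Clause V A₁ A₃)}
    {T : Set (Set (Clause V A₁ A₃))} (hT : Relation.ReflTransGen Step {Φ} T) :
    ∀ ϑ ∈ T, Φ ⊆ ϑ := by
  induction hT with
  | refl => intro ϑ hϑ; rcases hϑ with rfl; exact subset_rfl
  | tail _ hstep ih =>
    intro ϑ' hϑ'
    rcases hstep with ⟨ϑ, hϑ, c, i, hc, hj, rfl⟩ | ⟨ϑ, hϑ, l, rfl⟩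
    · rcases hϑ' with ⟨h1, _⟩ | h2
      · exact ih ϑ' h1
      · rcases h2 with rfl
        exact (ih ϑ hϑ).trans (Set.subset_insert _ _)
    · rcases hϑ' with ⟨h1, _⟩ | h2
      · exact ih ϑ' h1
      · rcases h2 with rfl | rfl <;> exact (ih ϑ hϑ).trans (Set.subset_insert _ _)

/-- Completeness of the KE-tableau: if a complete KE-tableau for Φ (every branch is
closed, or open, fulfilled and free of equalities between distinct variables) has at
least one open branch, then Φ is satisfiable. -/
theorem ke_tableau_complete {V A₁ A₃ : Type u} (Φ : Set (Clause V A₁ A₃))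
    (T : Set (Set (Clause V A₁ A₃)))
    (hT : Relation.ReflTransGen Step {Φ} T)
    (hcomplete : ∀ ϑ ∈ T, ClosedBranch ϑ ∨ (Fulfilled ϑ ∧ NoDistinctEq ϑ))
    (hopen : ∃ ϑ ∈ T, ¬ ClosedBranch ϑ) :
    ∃ (D : Type u) (val : V → D) (m1 : A₁ → Set D) (m3 : A₃ → Set (D × D)),
      ∀ c ∈ Φ, Clause.eval val m1 m3 c := by
  have key : ∀ ϑ ∈ T, Φ ⊆ ϑ := ke_phi_subset hT
  obtain ⟨ϑ, hϑT, hop⟩ := hopen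
  obtain ⟨hful, hnde⟩ := (hcomplete ϑ hϑT).resolve_left hop
  have hΦ : Φ ⊆ ϑ := key ϑ hϑT
  refine ⟨V, id, fun X => {x | ([⟨true, Atom.mem1 x X⟩] : Clause V A₁ A₃) ∈ ϑ},
    fun X => {p | ([⟨true, Atom.mem3 p.1 p.2 X⟩] : Clause V A₁ A₃) ∈ ϑ}, ?_⟩
  -- every unit literal on ϑ is satisfied
  have hunit : ∀ l : KLit V A₁ A₃, ([l] : Clause V A₁ A₃) ∈ ϑ →
      KLit.eval id (fun X => {x | ([⟨true, Atom.mem1 x X⟩] : Clause V A₁ A₃) ∈ ϑ})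
        (fun X => {p | ([⟨true, Atom.mem3 p.1 p.2 X⟩] : Clause V A₁ A₃) ∈ ϑ}) l := by
    rintro ⟨b, a⟩ hl
    cases b with
    | true =>
      cases a with
      | eq x y => exact hnde x y hl
      | mem1 x X => exact hl
      | mem3 x y X => exact hl
    | false =>
      cases a with
      | eq x y =>
        intro hxy
        simp only [id] at hxy
        subst hxy
        exact hop (Or.inr ⟨x, hl⟩)
      | mem1 x X =>
        intro hmem
        exact hop (Or.inl ⟨⟨true, Atom.mem1 x X⟩, hmem, hl⟩)
      | mem3 x y X =>
        intro hmem
        exact hop (Or.inl ⟨⟨true, Atom.mem3 x y X⟩, hmem, hl⟩)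
  intro c hc
  obtain ⟨l, hlc, hlϑ⟩ := hful c (hΦ hc)
  exact ⟨l, hlc, hunit l hlϑ⟩
end

section
/- Termination of the KE-tableau expansion loop: the process that repeatedly selects an open branch with a non-fulfilled disjunction and applies either the E-rule (decreasing the number of non-fulfilled disjunctions on that branch) or the PB-rule (on one child the disjunction becomes fulfilled, on the other the set of complements of its disjuncts present on the branch strictly grows) terminates after finitely many steps. -/
/-- A disjunction c on the branch ϑ is fulfilled if some of its disjuncts occurs
(as a singleton literal clause) on ϑ. -/
def FulfilledOn {L : Type*} [DecidableEq L] (ϑ : Finset (List L)) (c : List L) : Prop :=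
  ∃ l ∈ c, ([l] : List L) ∈ ϑ

/-- A branch is closed if it contains a complementary pair of literals. -/
def ClosedB {L : Type*} [DecidableEq L] (compl : L → L) (ϑ : Finset (List L)) : Prop :=
  ∃ l : L, ([l] : List L) ∈ ϑ ∧ ([compl l] : List L) ∈ ϑ

/-- One step of the KE-tableau expansion loop: select an open branch ϑ with a
non-fulfilled disjunction c and apply either the E-rule (the complements of all
disjuncts but one occur on ϑ; add the remaining disjunct) or the PB-rule (split on a
disjunct whose complement is not yet on the branch). -/
def ExpStep {L : Type*} [DecidableEq L] (compl : L → L)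
    (T T' : Finset (Finset (List L))) : Prop :=
  ∃ ϑ ∈ T, ¬ ClosedB compl ϑ ∧ ∃ c ∈ ϑ, ¬ FulfilledOn ϑ c ∧
    ((∃ i : Fin c.length,
        (∀ j : Fin c.length, j ≠ i → ([compl (c.get j)] : List L) ∈ ϑ) ∧
        T' = insert (insert ([c.get i] : List L) ϑ) (T.erase ϑ)) ∨
     (∃ h : Fin c.length, ([compl (c.get h)] : List L) ∉ ϑ ∧
        T' = insert (insert ([c.get h] : List L) ϑ)
              (insert (insert ([compl (c.get h)] : List L) ϑ) (T.erase ϑ))))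

/-!
An unfulfilled disjunction `c` on a branch `ϑ` weighs one more than the number of its
disjuncts whose complement is not yet on `ϑ`; a fulfilled one weighs nothing, and the weight
of a branch is the total weight of its formulae. Adding a formula never increases the weight of
a disjunction. Every branch a rule produces adds to its parent either a disjunct of the
selected disjunction, which fulfils it, or the missing complement of one of its disjuncts, so
it weighs strictly less than the parent. A branch of weight `k + 1` is replaced by at most two
branches of weight at most `k`, and `2 * 3 ^ k < 3 ^ (k + 1)`, so the sum of `3 ^ weight` over
the branches of the tableau strictly decreases at every step.
-/

open Finset

theorem Finset.sum_insert_le {α M : Type*} [DecidableEq α] [AddCommMonoid M] [PartialOrder M]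
    [CanonicallyOrderedAdd M] (s : Finset α) (a : α) (f : α → M) :
    ∑ x ∈ insert a s, f x ≤ f a + ∑ x ∈ s, f x := by
  by_cases ha : a ∈ s
  · rw [insert_eq_of_mem ha]
    exact le_add_self
  · rw [sum_insert ha]

theorem Finset.sum_three_pow_replace_lt {α : Type*} [DecidableEq α] {s : Finset α} {a : α}
    (b c : α) (f : α → ℕ) (ha : a ∈ s) (hb : f b < f a) (hc : f c < f a) :
    ∑ x ∈ insert b (insert c (s.erase a)), 3 ^ f x < ∑ x ∈ s, 3 ^ f x := by
  obtain ⟨k, hk⟩ : ∃ k, f a = k + 1 := Nat.exists_eq_add_one_of_ne_zero (by omega)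
  have hb' : 3 ^ f b ≤ 3 ^ k := Nat.pow_le_pow_right (by norm_num) (by omega)
  have hc' : 3 ^ f c ≤ 3 ^ k := Nat.pow_le_pow_right (by norm_num) (by omega)
  have hpos : 0 < 3 ^ k := by positivity
  calc ∑ x ∈ insert b (insert c (s.erase a)), 3 ^ f x
      ≤ 3 ^ f b + (3 ^ f c + ∑ x ∈ s.erase a, 3 ^ f x) :=
        (sum_insert_le _ _ _).trans (add_le_add le_rfl (sum_insert_le _ _ _))
    _ < 3 ^ f a + ∑ x ∈ s.erase a, 3 ^ f x := by rw [hk, pow_succ]; omega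
    _ = ∑ x ∈ s, 3 ^ f x := add_sum_erase s (fun x => 3 ^ f x) ha

theorem FulfilledOn.mono {L : Type*} [DecidableEq L] {ϑ ϑ' : Finset (List L)} {c : List L}
    (h : ϑ ⊆ ϑ') (hc : FulfilledOn ϑ c) : FulfilledOn ϑ' c :=
  let ⟨l, hl, hlϑ⟩ := hc
  ⟨l, hl, h hlϑ⟩

theorem fulfilledOn_insert_of_mem {L : Type*} [DecidableEq L] (ϑ : Finset (List L))
    {c : List L} {l : L} (hl : l ∈ c) : FulfilledOn (insert [l] ϑ) c :=
  ⟨l, hl, mem_insert_self _ _⟩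

namespace KETableau

variable {L : Type*} [DecidableEq L] (compl : L → L)

def missingCompls (ϑ : Finset (List L)) (c : List L) : Finset L :=
  c.toFinset.filter fun l => [compl l] ∉ ϑ

open Classical in
noncomputable def clauseWeight (ϑ : Finset (List L)) (c : List L) : ℕ :=
  if FulfilledOn ϑ c then 0 else (missingCompls compl ϑ c).card + 1

noncomputable def branchWeight (ϑ : Finset (List L)) : ℕ :=
  ∑ c ∈ ϑ, clauseWeight compl ϑ c

noncomputable def tableauWeight (T : Finset (Finset (List L))) : ℕ :=
  ∑ ϑ ∈ T, 3 ^ branchWeight compl ϑ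

variable {compl}

theorem missingCompls_anti {ϑ ϑ' : Finset (List L)} (h : ϑ ⊆ ϑ') (c : List L) :
    missingCompls compl ϑ' c ⊆ missingCompls compl ϑ c :=
  monotone_filter_right _ fun _ _ hl hlϑ => hl (h hlϑ)

theorem clauseWeight_eq_zero {ϑ : Finset (List L)} {c : List L} (hc : FulfilledOn ϑ c) :
    clauseWeight compl ϑ c = 0 :=
  if_pos hc

theorem clauseWeight_of_not_fulfilledOn {ϑ : Finset (List L)} {c : List L}
    (hc : ¬ FulfilledOn ϑ c) :
    clauseWeight compl ϑ c = (missingCompls compl ϑ c).card + 1 :=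
  if_neg hc

theorem clauseWeight_anti {ϑ ϑ' : Finset (List L)} (h : ϑ ⊆ ϑ') (c : List L) :
    clauseWeight compl ϑ' c ≤ clauseWeight compl ϑ c := by
  by_cases hc' : FulfilledOn ϑ' c
  · simp [clauseWeight_eq_zero hc']
  have hc : ¬ FulfilledOn ϑ c := fun hc => hc' (hc.mono h)
  rw [clauseWeight_of_not_fulfilledOn hc', clauseWeight_of_not_fulfilledOn hc]
  exact Nat.succ_le_succ (card_le_card (missingCompls_anti h c))

theorem clauseWeight_insert_disjunct_lt {ϑ : Finset (List L)} {c : List L}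
    (hc : ¬ FulfilledOn ϑ c) {l : L} (hl : l ∈ c) :
    clauseWeight compl (insert [l] ϑ) c < clauseWeight compl ϑ c := by
  rw [clauseWeight_eq_zero (fulfilledOn_insert_of_mem ϑ hl), clauseWeight_of_not_fulfilledOn hc]
  exact Nat.succ_pos _

theorem clauseWeight_insert_compl_lt {ϑ : Finset (List L)} {c : List L}
    (hc : ¬ FulfilledOn ϑ c) {l : L} (hl : l ∈ c) (hmiss : [compl l] ∉ ϑ) :
    clauseWeight compl (insert [compl l] ϑ) c < clauseWeight compl ϑ c := by
  by_cases hc' : FulfilledOn (insert [compl l] ϑ) c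
  · rw [clauseWeight_eq_zero hc', clauseWeight_of_not_fulfilledOn hc]
    exact Nat.succ_pos _
  rw [clauseWeight_of_not_fulfilledOn hc', clauseWeight_of_not_fulfilledOn hc]
  refine Nat.succ_lt_succ (card_lt_card ⟨missingCompls_anti (subset_insert _ _) c, fun h => ?_⟩)
  have hl' : l ∈ missingCompls compl ϑ c := mem_filter.2 ⟨List.mem_toFinset.2 hl, hmiss⟩
  exact (mem_filter.1 (h hl')).2 (mem_insert_self _ _)

/-- The new literal `[x]` is itself fulfilled, so only the weights of the old formulae count. -/
theorem branchWeight_insert_lt {ϑ : Finset (List L)} {x : L} {c : List L} (hc : c ∈ ϑ)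
    (hlt : clauseWeight compl (insert [x] ϑ) c < clauseWeight compl ϑ c) :
    branchWeight compl (insert [x] ϑ) < branchWeight compl ϑ := by
  have hx : [x] ∉ ϑ := fun hx => hlt.ne (by rw [insert_eq_of_mem hx])
  rw [branchWeight, sum_insert hx,
    clauseWeight_eq_zero (fulfilledOn_insert_of_mem ϑ (List.mem_singleton_self x)), zero_add]
  exact sum_lt_sum (fun d _ => clauseWeight_anti (subset_insert _ _) d) ⟨c, hc, hlt⟩

theorem tableauWeight_lt_of_expStep {T T' : Finset (Finset (List L))}
    (h : ExpStep compl T T') : tableauWeight compl T' < tableauWeight compl T := by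
  obtain ⟨ϑ, hϑ, -, c, hc, hnf, hrule⟩ := h
  have hdisj (i : Fin c.length) := branchWeight_insert_lt hc
    (clauseWeight_insert_disjunct_lt (compl := compl) hnf (c.get_mem i))
  rcases hrule with ⟨i, -, rfl⟩ | ⟨i, hmiss, rfl⟩
  · -- the single child of the E-rule, counted twice
    rw [← insert_idem]
    exact sum_three_pow_replace_lt _ _ _ hϑ (hdisj i) (hdisj i)
  · exact sum_three_pow_replace_lt _ _ _ hϑ (hdisj i)
      (branchWeight_insert_lt hc (clauseWeight_insert_compl_lt hnf (c.get_mem i) hmiss))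

end KETableau

/-- Termination of the KE-tableau expansion loop: there is no infinite sequence of
applications of the E-rule and the PB-rule to open branches with non-fulfilled
disjunctions. -/
theorem exp_loop_terminates {L : Type*} [DecidableEq L] (compl : L → L) :
    ∀ f : ℕ → Finset (Finset (List L)),
      ¬ (∀ n : ℕ, ExpStep compl (f n) (f (n + 1))) :=
  fun f hf => not_strictAnti_of_wellFoundedLT (fun n => KETableau.tableauWeight compl (f n))
    (strictAnti_nat_of_succ_lt fun n => KETableau.tableauWeight_lt_of_expStep (hf n))
end
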